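/- Let f : ℝⁿ → ℝ be convex, and for 1 ≤ k ≤ n let S^k(f) := {x : the subdifferential ∂f(x) has affine dimension ≥ k}. Then S^k(f) has Hausdorff dimension at most n - k; in particular the set of points of non-differentiability S¹(f) has Lebesgue measure zero. -/

import Mathlib

/-!
The map `x ↦ ∂f(x)` is monotone: `⟪u - w, x - y⟫ ≥ 0` for `u ∈ ∂f(x)`, `w ∈ ∂f(y)`. Fix a
subspace `V`, a point `c` and constants `ρ > 0`, `M`. If at both `x` and `y`, for every unit
`e ∈ V`, there are subgradients of norm `≤ M` on either side of the level `⟪c, e⟫` with margin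
`ρ`, then pairing the lower one at `x` with the upper one at `y` in the monotonicity inequality
gives `ρ ‖P_V (x - y)‖ ≤ M ‖P_Vᗮ (x - y)‖`. So the set of such points is a Lipschitz graph over
`Vᗮ`, of Hausdorff dimension at most `n - dim V`. When `∂f(x)` has dimension `≥ k` it contains
a `k`-dimensional disc, and `V`, `c`, `ρ`, `M` can be taken from countable families (`V`
spanned by `k` vectors close to an orthonormal basis of the disc), so the stratum is a countable
union of such graphs. Sets of Hausdorff dimension `< n` are Lebesgue-null.
-/

open MeasureTheory Set Module TopologicalSpace Submodule
open scoped RealInnerProductSpace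

theorem MeasureTheory.Measure.addHaar_eq_zero_of_dimH_lt_finrank {E : Type*} [NormedAddCommGroup E]
    [NormedSpace ℝ E] [FiniteDimensional ℝ E] [MeasurableSpace E] [BorelSpace E]
    (μ : Measure E) [μ.IsAddHaarMeasure] {s : Set E} (hs : dimH s < finrank ℝ E) : μ s = 0 :=
  measure_zero_of_dimH_lt (d := finrank ℝ E)
    (by simpa using Measure.absolutelyContinuous_isAddHaarMeasure μ μH[finrank ℝ E])
    (by simpa using hs)

section

variable {E : Type*} [NormedAddCommGroup E] [InnerProductSpace ℝ E]

def subgradients (f : E → ℝ) (x : E) : Set E := {v | ∀ z, f x + ⟪v, z - x⟫ ≤ f z}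

theorem convex_subgradients (f : E → ℝ) (x : E) : Convex ℝ (subgradients f x) := by
  intro u hu w hw a b ha hb hab z
  have hfx : f x = a * f x + b * f x := by rw [← add_mul, hab, one_mul]
  have hfz : f z = a * f z + b * f z := by rw [← add_mul, hab, one_mul]
  rw [inner_add_left, real_inner_smul_left, real_inner_smul_left, hfx, hfz]
  nlinarith [mul_le_mul_of_nonneg_left (hu z) ha, mul_le_mul_of_nonneg_left (hw z) hb]

theorem inner_sub_sub_nonneg_of_mem_subgradients {f : E → ℝ} {x y u w : E}
    (hu : u ∈ subgradients f x) (hw : w ∈ subgradients f y) : 0 ≤ ⟪u - w, x - y⟫ := by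
  have hxy := hu y
  have hyx := hw x
  rw [← neg_sub x y, inner_neg_right] at hxy
  rw [inner_sub_left]
  linarith

theorem dimH_le_finrank_orthogonal_of_norm_starProjection_le [FiniteDimensional ℝ E]
    {V : Submodule ℝ E} {s : Set E} {C : ℝ}
    (h : ∀ x ∈ s, ∀ y ∈ s, ‖V.starProjection (x - y)‖ ≤ C * ‖Vᗮ.starProjection (x - y)‖) :
    dimH s ≤ finrank ℝ Vᗮ := by
  set g : s → Vᗮ := fun x => Vᗮ.orthogonalProjectionOnto x
  have hg : AntilipschitzWith (C + 1).toNNReal g := by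
    refine AntilipschitzWith.of_le_mul_dist fun x y => ?_
    rw [Subtype.dist_eq, dist_eq_norm, dist_eq_norm, ← map_sub, ← norm_coe,
      ← starProjection_apply]
    calc ‖(x : E) - y‖
        = ‖V.starProjection (x - y) + Vᗮ.starProjection (x - y)‖ := by
          rw [starProjection_add_starProjection_orthogonal]
      _ ≤ (C + 1) * ‖Vᗮ.starProjection (x - y)‖ := by
          linarith [norm_add_le (V.starProjection (x - y)) (Vᗮ.starProjection (x - y)),
            h x x.2 y y.2]
      _ ≤ (C + 1).toNNReal * ‖Vᗮ.starProjection (x - y)‖ := by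
          gcongr; exact Real.le_coe_toNNReal _
  calc dimH s = dimH (univ : Set s) := by
        rw [← (isometry_subtype_coe (s := s)).dimH_image, image_univ, Subtype.range_coe]
    _ ≤ dimH (g '' univ) := hg.le_dimH_image _
    _ ≤ dimH (univ : Set Vᗮ) := dimH_mono (subset_univ _)
    _ = finrank ℝ Vᗮ := Real.dimH_univ_eq_finrank _

def straddleSet (f : E → ℝ) (V : Submodule ℝ E) (c : E) (ρ M : ℝ) : Set E :=
  {x | ∀ e ∈ V, ‖e‖ = 1 →
    (∃ u ∈ subgradients f x, ‖u‖ ≤ M ∧ ⟪u, e⟫ + ρ ≤ ⟪c, e⟫) ∧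
    (∃ u ∈ subgradients f x, ‖u‖ ≤ M ∧ ⟪c, e⟫ + ρ ≤ ⟪u, e⟫)}

theorem mul_norm_starProjection_le_of_mem_straddleSet {f : E → ℝ} {V : Submodule ℝ E}
    [V.HasOrthogonalProjection] {c : E} {ρ M : ℝ} (hM : 0 ≤ M) {x y : E}
    (hx : x ∈ straddleSet f V c ρ M) (hy : y ∈ straddleSet f V c ρ M) :
    ρ * ‖V.starProjection (x - y)‖ ≤ M * ‖Vᗮ.starProjection (x - y)‖ := by
  set σ := V.starProjection (x - y)
  set τ := Vᗮ.starProjection (x - y)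
  rcases eq_or_ne σ 0 with hσ | hσ
  · rw [hσ, norm_zero, mul_zero]; positivity
  have hσpos : 0 < ‖σ‖ := norm_pos_iff.mpr hσ
  set e := ‖σ‖⁻¹ • σ
  have he1 : ‖e‖ = 1 := by rw [norm_smul, norm_inv, norm_norm, inv_mul_cancel₀ hσpos.ne']
  obtain ⟨u₁, hu₁, hu₁M, hu₁e⟩ := (hx e (V.smul_mem _ (starProjection_apply_mem V _)) he1).1
  obtain ⟨u₂, hu₂, hu₂M, hu₂e⟩ := (hy e (V.smul_mem _ (starProjection_apply_mem V _)) he1).2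
  have hσe : ⟪u₁ - u₂, σ⟫ = ‖σ‖ * ⟪u₁ - u₂, e⟫ := by
    rw [real_inner_smul_right, mul_inv_cancel_left₀ hσpos.ne']
  have hτ : ⟪u₁ - u₂, τ⟫ ≤ 2 * M * ‖τ‖ :=
    calc ⟪u₁ - u₂, τ⟫ ≤ ‖u₁ - u₂‖ * ‖τ‖ := real_inner_le_norm _ _
      _ ≤ 2 * M * ‖τ‖ := by
        gcongr; linarith [norm_sub_le u₁ u₂]
  have hmono := inner_sub_sub_nonneg_of_mem_subgradients hu₁ hu₂
  rw [← starProjection_add_starProjection_orthogonal (K := V) (x - y), inner_add_right, hσe,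
    inner_sub_left] at hmono
  nlinarith

theorem dimH_straddleSet_le [FiniteDimensional ℝ E] (f : E → ℝ) (V : Submodule ℝ E) (c : E)
    {ρ M : ℝ} (hρ : 0 < ρ) (hM : 0 ≤ M) : dimH (straddleSet f V c ρ M) ≤ finrank ℝ Vᗮ :=
  dimH_le_finrank_orthogonal_of_norm_starProjection_le (C := M / ρ) fun _ hx _ hy => by
    rw [div_mul_eq_mul_div, le_div_iff₀ hρ, mul_comm]
    exact mul_norm_starProjection_le_of_mem_straddleSet hM hx hy

section Orthonormal

variable {ι : Type*} [Fintype ι] {v q : ι → E} {ε : ℝ}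

theorem Orthonormal.norm_sum_smul_sub_le (hv : Orthonormal ℝ v) (hq : ∀ i, ‖q i - v i‖ ≤ ε)
    (t : ι → ℝ) :
    ‖∑ i, t i • q i - ∑ i, t i • v i‖ ≤ (Fintype.card ι * ε) * ‖∑ i, t i • v i‖ := by
  have hcoeff : ∀ i, |t i| ≤ ‖∑ j, t j • v j‖ := fun i => by
    simpa [hv.inner_right_fintype, hv.1 i] using abs_real_inner_le_norm (v i) (∑ j, t j • v j)
  rw [← Finset.sum_sub_distrib]
  calc ‖∑ i, (t i • q i - t i • v i)‖ ≤ ∑ i, |t i| * ‖q i - v i‖ := by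
        refine (norm_sum_le _ _).trans_eq ?_
        simp only [← smul_sub, norm_smul, Real.norm_eq_abs]
    _ ≤ ∑ _i : ι, ‖∑ j, t j • v j‖ * ε := by
        gcongr with i; exacts [hcoeff i, hq i]
    _ = (Fintype.card ι * ε) * ‖∑ i, t i • v i‖ := by
        rw [Finset.sum_const, Finset.card_univ, nsmul_eq_mul]; ring

theorem Orthonormal.linearIndependent_of_norm_sub_le (hv : Orthonormal ℝ v)
    (hq : ∀ i, ‖q i - v i‖ ≤ ε) (hε : Fintype.card ι * ε < 1) : LinearIndependent ℝ q := by
  rw [Fintype.linearIndependent_iff]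
  intro t ht
  have hsmall := hv.norm_sum_smul_sub_le hq t
  rw [ht, zero_sub, norm_neg] at hsmall
  have hzero : ∑ i, t i • v i = 0 :=
    norm_eq_zero.mp (by nlinarith [norm_nonneg (∑ i, t i • v i)])
  exact Fintype.linearIndependent_iff.mp hv.linearIndependent t hzero

theorem Orthonormal.exists_mem_span_half_le_inner (hv : Orthonormal ℝ v)
    (hq : ∀ i, ‖q i - v i‖ ≤ ε) (hε : Fintype.card ι * ε ≤ 1 / 4) {e : E}
    (he : e ∈ span ℝ (range q)) (he1 : ‖e‖ = 1) :
    ∃ w ∈ span ℝ (range v), ‖w‖ ≤ 1 ∧ 1 / 2 ≤ ⟪w, e⟫ := by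
  obtain ⟨t, rfl⟩ := (mem_span_range_iff_exists_fun ℝ).mp he
  set w := ∑ i, t i • v i
  have hw : w ∈ span ℝ (range v) :=
    sum_mem fun i _ => smul_mem _ _ (subset_span (mem_range_self i))
  have hclose : ‖∑ i, t i • q i - w‖ ≤ 1 / 4 * ‖w‖ :=
    (hv.norm_sum_smul_sub_le hq t).trans (by gcongr)
  have hw43 : ‖w‖ ≤ 4 / 3 := by
    linarith [norm_sub_norm_le w (∑ i, t i • q i), norm_sub_rev w (∑ i, t i • q i)]
  have hinner : 2 / 3 ≤ ⟪w, ∑ i, t i • q i⟫ := by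
    have := abs_real_inner_le_norm (∑ i, t i • q i - w) (∑ i, t i • q i)
    rw [inner_sub_left, real_inner_self_eq_norm_sq, he1, one_pow, mul_one] at this
    linarith [(abs_le.mp this).2]
  refine ⟨(3 / 4 : ℝ) • w, smul_mem _ _ hw, ?_, ?_⟩
  · rw [norm_smul, Real.norm_of_nonneg (by norm_num)]; linarith
  · rw [real_inner_smul_left]; linarith

end Orthonormal

theorem Convex.exists_add_mem_of_mem_direction [FiniteDimensional ℝ E] {K : Set E}
    (hK : Convex ℝ K) (hne : K.Nonempty) :
    ∃ c ∈ K, ∃ r > 0, ∀ w ∈ (affineSpan ℝ K).direction, ‖w‖ ≤ r → c + w ∈ K := by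
  obtain ⟨_, ⟨y, hy, rfl⟩⟩ := hne.intrinsicInterior hK
  obtain ⟨ε, hε, hball⟩ := Metric.mem_nhds_iff.mp (mem_interior_iff_mem_nhds.mp hy)
  refine ⟨y, hball (Metric.mem_ball_self hε), ε / 2, by positivity, fun w hw hwr => ?_⟩
  have hyw : (y : E) + w ∈ affineSpan ℝ K := by
    simpa [vadd_eq_add, add_comm] using AffineSubspace.vadd_mem_of_mem_direction hw y.2
  refine hball (show (⟨y + w, hyw⟩ : affineSpan ℝ K) ∈ Metric.ball y ε from ?_)
  rw [Metric.mem_ball, Subtype.dist_eq, dist_eq_norm, add_sub_cancel_left]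
  linarith

theorem Submodule.exists_orthonormal_of_le_finrank (D : Submodule ℝ E) [FiniteDimensional ℝ D]
    {k : ℕ} (hk : k ≤ finrank ℝ D) : ∃ v : Fin k → E, Orthonormal ℝ v ∧ ∀ i, v i ∈ D := by
  set b := stdOrthonormalBasis ℝ D
  refine ⟨fun i => b (Fin.castLE hk i), ?_, fun i => (b _).2⟩
  exact (b.orthonormal.comp _ (Fin.castLE_injective hk)).comp_linearIsometry D.subtypeₗᵢ

theorem mem_straddleSet_of_add_mem_subgradients {f : E → ℝ} {x c₀ c : E}
    {V W : Submodule ℝ E} {r ρ M : ℝ}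
    (hball : ∀ w ∈ W, ‖w‖ ≤ r → c₀ + w ∈ subgradients f x)
    (hVW : ∀ e ∈ V, ‖e‖ = 1 → ∃ w ∈ W, ‖w‖ ≤ 1 ∧ 1 / 2 ≤ ⟪w, e⟫)
    (hr : 0 ≤ r) (hc : ‖c - c₀‖ + ρ ≤ r / 2) (hM : ‖c₀‖ + r ≤ M) :
    x ∈ straddleSet f V c ρ M := by
  intro e he he1
  obtain ⟨w, hw, hw1, hwe⟩ := hVW e he he1
  have hrw : ‖r • w‖ ≤ r := by
    rw [norm_smul, Real.norm_of_nonneg hr]; exact mul_le_of_le_one_right hr hw1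
  have hnorm : ∀ s : E, ‖s‖ ≤ r → ‖c₀ + s‖ ≤ M := fun s hs =>
    (norm_add_le _ _).trans (by linarith)
  have hcc₀ : |⟪c - c₀, e⟫| ≤ ‖c - c₀‖ := by
    simpa [he1] using abs_real_inner_le_norm (c - c₀) e
  have hrwe : r / 2 ≤ ⟪r • w, e⟫ := by
    rw [real_inner_smul_left]; nlinarith
  rw [inner_sub_left] at hcc₀
  refine ⟨⟨c₀ + -(r • w), hball _ (W.neg_mem (W.smul_mem r hw)) (by rwa [norm_neg]),
    hnorm _ (by rwa [norm_neg]), ?_⟩, ⟨c₀ + r • w, hball _ (W.smul_mem r hw) hrw,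
    hnorm _ hrw, ?_⟩⟩
  · rw [inner_add_left, inner_neg_left]; linarith [(abs_le.mp hcc₀).1]
  · rw [inner_add_left]; linarith [(abs_le.mp hcc₀).2]

theorem exists_mem_straddleSet [FiniteDimensional ℝ E] {f : E → ℝ} {k : ℕ} (hk : 1 ≤ k) {x : E}
    (hx : k ≤ finrank ℝ (affineSpan ℝ (subgradients f x)).direction) :
    ∃ i j N : ℕ, LinearIndependent ℝ (denseSeq (Fin k → E) i) ∧
      x ∈ straddleSet f (span ℝ (range (denseSeq (Fin k → E) i))) (denseSeq E j)
        (N + 1 : ℝ)⁻¹ N := by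
  have hne : (subgradients f x).Nonempty := by
    contrapose! hx
    rw [hx, AffineSubspace.span_empty, AffineSubspace.direction_bot, finrank_bot]
    omega
  obtain ⟨c₀, -, r, hr, hball⟩ := (convex_subgradients f x).exists_add_mem_of_mem_direction hne
  obtain ⟨v, hv, hvD⟩ := exists_orthonormal_of_le_finrank _ hx
  have hε : 0 < (4 * k : ℝ)⁻¹ := by positivity
  have hcard : Fintype.card (Fin k) * (4 * k : ℝ)⁻¹ = 1 / 4 := by
    rw [Fintype.card_fin]; field_simp
  obtain ⟨i, hi⟩ := (denseRange_denseSeq (Fin k → E)).exists_dist_lt v hε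
  have hq : ∀ l, ‖denseSeq (Fin k → E) i l - v l‖ ≤ (4 * k : ℝ)⁻¹ := fun l => by
    rw [← dist_eq_norm, dist_comm]; exact ((dist_pi_lt_iff hε).mp hi l).le
  obtain ⟨j, hj⟩ := (denseRange_denseSeq E).exists_dist_lt c₀ (by positivity : 0 < r / 4)
  obtain ⟨N, hN⟩ := exists_nat_ge (max (4 / r) (‖c₀‖ + r))
  refine ⟨i, j, N, hv.linearIndependent_of_norm_sub_le hq (by rw [hcard]; norm_num),
    mem_straddleSet_of_add_mem_subgradients
      (fun w hw => hball w (span_le.mpr (range_subset_iff.mpr hvD) hw))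
      (fun e he he1 => hv.exists_mem_span_half_le_inner hq hcard.le he he1) hr.le ?_ ?_⟩
  · have hρ : (N + 1 : ℝ)⁻¹ ≤ r / 4 := by
      rw [inv_le_comm₀ (by positivity) (by positivity), inv_div]
      linarith [le_max_left (4 / r) (‖c₀‖ + r)]
    rw [← dist_eq_norm, dist_comm]; linarith
  · exact (le_max_right _ _).trans hN

theorem dimH_setOf_le_finrank_subgradients_le [FiniteDimensional ℝ E] (f : E → ℝ) {k : ℕ}
    (hk : 1 ≤ k) :
    dimH {x | k ≤ finrank ℝ (affineSpan ℝ (subgradients f x)).direction} ≤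
      (finrank ℝ E - k : ℕ) := by
  set q := denseSeq (Fin k → E)
  calc _ ≤ dimH (⋃ (i : ℕ) (j : ℕ) (N : ℕ) (_ : LinearIndependent ℝ (q i)),
        straddleSet f (span ℝ (range (q i))) (denseSeq E j) (N + 1 : ℝ)⁻¹ N) := by
        refine dimH_mono fun x hx => ?_
        obtain ⟨i, j, N, hli, hmem⟩ := exists_mem_straddleSet hk hx
        simp only [mem_iUnion]
        exact ⟨i, j, N, hli, hmem⟩
    _ ≤ _ := by
        simp only [dimH_iUnion]
        refine iSup_le fun i => iSup_le fun j => iSup_le fun N => iSup_le fun hli => ?_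
        refine (dimH_straddleSet_le _ _ _ (by positivity) N.cast_nonneg).trans_eq ?_
        have hsum := finrank_add_finrank_orthogonal (span ℝ (range (q i)))
        rw [finrank_span_eq_card hli, Fintype.card_fin] at hsum
        norm_cast
        omega

end

theorem dimH_subdifferential_strata_general {n : ℕ}
    (f : EuclideanSpace ℝ (Fin n) → ℝ)
    (k : ℕ) (hk1 : 1 ≤ k) (hkn : k ≤ n) :
    dimH {x : EuclideanSpace ℝ (Fin n) |
        k ≤ Module.finrank ℝ
          (affineSpan ℝ {v : EuclideanSpace ℝ (Fin n) |
            ∀ z, f x + ⟪v, z - x⟫ ≤ f z}).direction} ≤ (n - k : ℕ) ∧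
      volume {x : EuclideanSpace ℝ (Fin n) |
        1 ≤ Module.finrank ℝ
          (affineSpan ℝ {v : EuclideanSpace ℝ (Fin n) |
            ∀ z, f x + ⟪v, z - x⟫ ≤ f z}).direction} = 0 := by
  have hstratum : ∀ {m : ℕ}, 1 ≤ m →
      dimH {x | m ≤ finrank ℝ (affineSpan ℝ (subgradients f x)).direction} ≤ (n - m : ℕ) :=
    fun hk => by simpa only [finrank_euclideanSpace_fin] using
      dimH_setOf_le_finrank_subgradients_le f hk
  refine ⟨hstratum hk1, Measure.addHaar_eq_zero_of_dimH_lt_finrank volume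
    ((hstratum le_rfl).trans_lt ?_)⟩
  rw [finrank_euclideanSpace_fin]
  exact_mod_cast Nat.sub_lt (by omega) one_pos

/-- Alberti-type theorem: for convex f : ℝⁿ → ℝ, the set S^k(f) of points where the
subdifferential has affine dimension ≥ k has Hausdorff dimension ≤ n - k; in particular
the non-differentiability set S¹(f) is Lebesgue-null. -/
theorem dimH_subdifferential_strata {n : ℕ}
    (f : EuclideanSpace ℝ (Fin n) → ℝ) (hf : ConvexOn ℝ Set.univ f)
    (k : ℕ) (hk1 : 1 ≤ k) (hkn : k ≤ n) :
    dimH {x : EuclideanSpace ℝ (Fin n) |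
        k ≤ Module.finrank ℝ
          (affineSpan ℝ {v : EuclideanSpace ℝ (Fin n) |
            ∀ z, f x + ⟪v, z - x⟫ ≤ f z}).direction} ≤ (n - k : ℕ) ∧
      volume {x : EuclideanSpace ℝ (Fin n) |
        1 ≤ Module.finrank ℝ
          (affineSpan ℝ {v : EuclideanSpace ℝ (Fin n) |
            ∀ z, f x + ⟪v, z - x⟫ ≤ f z}).direction} = 0 :=
  dimH_subdifferential_strata_general f k hk1 hkn
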